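/- arXiv:1003.2081 — 8 statements merged into one kernel-verified Lean document; each statement's English description precedes it below -/
import Mathlib

section
/- The operation ⊕ on 𝒜 is neither commutative nor associative: in 𝒜 one has 1⊕(1⊕1) ≠ (1⊕1)⊕1, so that commutativity and associativity both fail already on the elements 1 and 1⊕1. -/
/-- The smallest congruence on the free magma on one generator containing
all instances of the medial law `(w⊕x)⊕(y⊕z) = (w⊕y)⊕(x⊕z)`. -/
inductive MedialRel : FreeMagma PUnit → FreeMagma PUnit → Prop
  | medial (w x y z : FreeMagma PUnit) :
      MedialRel ((w * x) * (y * z)) ((w * y) * (x * z))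
  | refl (a : FreeMagma PUnit) : MedialRel a a
  | symm {a b : FreeMagma PUnit} : MedialRel a b → MedialRel b a
  | trans {a b c : FreeMagma PUnit} : MedialRel a b → MedialRel b c → MedialRel a c
  | mul {a b c d : FreeMagma PUnit} :
      MedialRel a b → MedialRel c d → MedialRel (a * c) (b * d)

/-- The noncommutative natural numbers `𝒜 := M/∼`. -/
def NCN : Type := Quot MedialRel

/-- The induced binary operation `⊕` on `𝒜`. -/
def NCN.oplus : NCN → NCN → NCN :=
  Quot.map₂ (· * ·) (fun a _ _ h => MedialRel.mul (MedialRel.refl a) h)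
    (fun _ _ b h => MedialRel.mul h (MedialRel.refl b))

/-- The class of the generator `1` in `𝒜`. -/
def NCN.one : NCN := Quot.mk _ (FreeMagma.of PUnit.unit)

/-- Substitution multiplication on `M`: `a · b` is the image of `a` under the unique
magma homomorphism `M → M` sending the generator to `b`. -/
def FreeMagma.subMul (a b : FreeMagma PUnit) : FreeMagma PUnit :=
  (FreeMagma.lift fun _ => b) a

theorem MedialRel.subMul_left {a a' : FreeMagma PUnit} (b : FreeMagma PUnit)
    (h : MedialRel a a') : MedialRel (a.subMul b) (a'.subMul b) := by
  induction h with
  | medial w x y z =>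
      simp only [FreeMagma.subMul, map_mul]
      exact MedialRel.medial _ _ _ _
  | refl a => exact MedialRel.refl _
  | symm _ ih => exact MedialRel.symm ih
  | trans _ _ ih1 ih2 => exact MedialRel.trans ih1 ih2
  | mul _ _ ih1 ih2 =>
      simp only [FreeMagma.subMul, map_mul] at *
      exact MedialRel.mul ih1 ih2

theorem MedialRel.subMul_right (a : FreeMagma PUnit) {b b' : FreeMagma PUnit}
    (h : MedialRel b b') : MedialRel (a.subMul b) (a.subMul b') := by
  induction a with
  | ih1 u => simpa [FreeMagma.subMul] using h
  | ih2 x y ihx ihy =>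
      simp only [FreeMagma.subMul, map_mul] at *
      exact MedialRel.mul ihx ihy

/-- The induced multiplication on `𝒜`. -/
def NCN.mul : NCN → NCN → NCN :=
  Quot.map₂ FreeMagma.subMul (fun a _ _ h => MedialRel.subMul_right a h)
    (fun _ _ b h => MedialRel.subMul_left b h)

/-! The depth of the leftmost leaf of a term is invariant under the medial law, since both
sides of `(w⊕x)⊕(y⊕z) = (w⊕y)⊕(x⊕z)` begin with `w` at depth two. It therefore descends to
`𝒜`, where it takes the value `1` on `1⊕(1⊕1)` and `2` on `(1⊕1)⊕1`. -/

namespace FreeMagma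

variable {α : Type*}

def leftDepth : FreeMagma α → ℕ
  | .of _ => 0
  | .mul a _ => a.leftDepth + 1

@[simp]
theorem leftDepth_mul (a b : FreeMagma α) : (a * b).leftDepth = a.leftDepth + 1 := rfl

end FreeMagma

theorem MedialRel.leftDepth_eq {a b : FreeMagma PUnit} (h : MedialRel a b) :
    a.leftDepth = b.leftDepth := by
  induction h with
  | medial => simp only [FreeMagma.leftDepth_mul]
  | refl => rfl
  | symm _ ih => exact ih.symm
  | trans _ _ ih₁ ih₂ => exact ih₁.trans ih₂
  | mul _ _ ih₁ _ => simp only [FreeMagma.leftDepth_mul, ih₁]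

namespace NCN

def leftDepth : NCN → ℕ :=
  Quot.lift FreeMagma.leftDepth fun _ _ h => h.leftDepth_eq

theorem leftDepth_one : one.leftDepth = 0 := rfl

theorem leftDepth_oplus (a b : NCN) : (a.oplus b).leftDepth = a.leftDepth + 1 := by
  induction a using Quot.ind
  induction b using Quot.ind
  rfl

end NCN

/-- `1⊕(1⊕1) ≠ (1⊕1)⊕1` in `𝒜`, so `⊕` is neither commutative
nor associative. -/
theorem ncn_oplus_not_comm_not_assoc :
    NCN.oplus NCN.one (NCN.oplus NCN.one NCN.one) ≠
        NCN.oplus (NCN.oplus NCN.one NCN.one) NCN.one ∧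
      ¬ (∀ a b : NCN, NCN.oplus a b = NCN.oplus b a) ∧
      ¬ (∀ a b c : NCN, NCN.oplus (NCN.oplus a b) c = NCN.oplus a (NCN.oplus b c)) := by
  have hne : NCN.oplus NCN.one (NCN.oplus NCN.one NCN.one) ≠
      NCN.oplus (NCN.oplus NCN.one NCN.one) NCN.one := fun h => by
    simpa [NCN.leftDepth_oplus, NCN.leftDepth_one] using congrArg NCN.leftDepth h
  exact ⟨hne, fun hcomm => hne (hcomm _ _), fun hassoc => hne (hassoc _ _ _).symm⟩
end

section
/- (Claim 3.2) The substitution multiplication descends to a well-defined operation on 𝒜 which is associative, and the class 1 of the generator is a two-sided unit: for all a, b, c ∈ 𝒜, (a·b)·c = a·(b·c), 1·a = a, and a·1 = a. -/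
theorem FreeMagma.lift_lift {α β γ : Type*} [Mul γ] (f : α → FreeMagma β) (g : β → γ)
    (a : FreeMagma α) : lift g (lift f a) = lift (lift g ∘ f) a := by
  have h : (lift g).comp (lift f) = lift (lift g ∘ f) := hom_ext rfl
  exact DFunLike.congr_fun h a

theorem FreeMagma.lift_of_apply {α : Type*} (a : FreeMagma α) : lift of a = a :=
  DFunLike.congr_fun (lift_comp_of' (MulHom.id _)) a

theorem FreeMagma.subMul_assoc (a b c : FreeMagma PUnit) :
    (a.subMul b).subMul c = a.subMul (b.subMul c) :=
  lift_lift _ _ a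

theorem FreeMagma.subMul_of (a : FreeMagma PUnit) : a.subMul (of PUnit.unit) = a :=
  lift_of_apply a

namespace NCN

theorem mul_mk (a b : FreeMagma PUnit) :
    NCN.mul (Quot.mk MedialRel a) (Quot.mk MedialRel b) = Quot.mk MedialRel (a.subMul b) :=
  rfl

theorem mul_assoc (a b c : NCN) : NCN.mul (NCN.mul a b) c = NCN.mul a (NCN.mul b c) := by
  induction a using Quot.ind
  induction b using Quot.ind
  induction c using Quot.ind
  exact congrArg (Quot.mk MedialRel) (FreeMagma.subMul_assoc _ _ _)

theorem one_mul (a : NCN) : NCN.mul NCN.one a = a := by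
  induction a using Quot.ind
  rfl

theorem mul_one (a : NCN) : NCN.mul a NCN.one = a := by
  induction a using Quot.ind
  exact congrArg (Quot.mk MedialRel) (FreeMagma.subMul_of _)

end NCN

/-- Claim 3.2: substitution multiplication descends to a well-defined
operation on `𝒜` which is associative with two-sided unit `1`. -/
theorem ncn_mul_descends_assoc_unital :
    (∀ a b : FreeMagma PUnit,
        NCN.mul (Quot.mk MedialRel a) (Quot.mk MedialRel b) =
          Quot.mk MedialRel (a.subMul b)) ∧
      (∀ a b c : NCN, NCN.mul (NCN.mul a b) c = NCN.mul a (NCN.mul b c)) ∧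
      (∀ a : NCN, NCN.mul NCN.one a = a) ∧
      (∀ a : NCN, NCN.mul a NCN.one = a) :=
  ⟨NCN.mul_mk, NCN.mul_assoc, NCN.one_mul, NCN.mul_one⟩
end

section
/- (Corollary 3.5, commutativity) Multiplication in 𝒜 is commutative: for all a, b ∈ 𝒜, a·b = b·a. -/
/-!
Substitution is right distributive on the nose, `(p⊕q)·b = p·b ⊕ q·b`, and the medial law
makes it left distributive up to `∼`, by induction on the left factor. As `1` is a two-sided
unit, induction on `a` then gives `a·b ∼ b·a`.
-/

namespace FreeMagma

@[simp]
theorem of_subMul (u : PUnit) (b : FreeMagma PUnit) : (of u).subMul b = b := rfl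

@[simp]
theorem mul_subMul (p q b : FreeMagma PUnit) :
    (p * q).subMul b = p.subMul b * q.subMul b := rfl

@[simp]
theorem subMul_of_s3 (a : FreeMagma PUnit) (u : PUnit) : a.subMul (of u) = a := by
  induction a with
  | ih1 => rfl
  | ih2 p q ihp ihq => rw [mul_subMul, ihp, ihq]

end FreeMagma

namespace MedialRel

theorem subMul_mul (a x y : FreeMagma PUnit) :
    MedialRel (a.subMul (x * y)) (a.subMul x * a.subMul y) := by
  induction a with
  | ih1 => exact refl _
  | ih2 p q ihp ihq => exact (mul ihp ihq).trans (medial _ _ _ _)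

theorem subMul_comm (a b : FreeMagma PUnit) : MedialRel (a.subMul b) (b.subMul a) := by
  induction a with
  | ih1 => rw [FreeMagma.of_subMul, FreeMagma.subMul_of_s3]; exact refl b
  | ih2 p q ihp ihq => exact (mul ihp ihq).trans (subMul_mul b p q).symm

end MedialRel

/-- Corollary 3.5, commutativity: multiplication in `𝒜` is commutative. -/
theorem ncn_mul_comm (a b : NCN) : NCN.mul a b = NCN.mul b a := by
  induction a using Quot.ind
  induction b using Quot.ind
  exact Quot.sound (MedialRel.subMul_comm _ _)
end

section
/- (Corollary 3.5, left distributivity) Multiplication in 𝒜 distributes over ⊕ from the left: for all a, b₁, b₂ ∈ 𝒜, a·(b₁⊕b₂) = (a·b₁) ⊕ (a·b₂). -/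
theorem FreeMagma.mul_subMul_s4 (x y b : FreeMagma PUnit) :
    (x * y).subMul b = x.subMul b * y.subMul b :=
  map_mul _ x y

/-- At a product `x ⊕ y`, the medial law swaps the middle terms of
`(x·b₁ ⊕ x·b₂) ⊕ (y·b₁ ⊕ y·b₂)`. -/
theorem MedialRel.subMul_mul_s4 (a b₁ b₂ : FreeMagma PUnit) :
    MedialRel (a.subMul (b₁ * b₂)) (a.subMul b₁ * a.subMul b₂) := by
  induction a with
  | ih1 => exact MedialRel.refl _
  | ih2 x y ihx ihy =>
      simp only [FreeMagma.mul_subMul_s4]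
      exact (MedialRel.mul ihx ihy).trans (MedialRel.medial _ _ _ _)

/-- Corollary 3.5, left distributivity: multiplication in `𝒜`
distributes over `⊕` from the left. -/
theorem ncn_mul_left_distrib (a b1 b2 : NCN) :
    NCN.mul a (NCN.oplus b1 b2) = NCN.oplus (NCN.mul a b1) (NCN.mul a b2) :=
  Quot.induction_on₃ a b1 b2 fun a b1 b2 => Quot.sound (MedialRel.subMul_mul_s4 a b1 b2)
end

section
/- (Lemma 3.4, for operations built from one medial binary operation) Let X be a type with a binary operation · satisfying the medial law (w·x)·(y·z) = (w·y)·(x·z) for all w, x, y, z ∈ X. Then any two operations on X obtained by composing · commute with one another: for every term s in the free magma on m generators, every term t in the free magma on n generators, and every array x : Fin m → Fin n → X, evaluating s at the values (evaluation of t at row i of x)_{i} equals evaluating t at the values (evaluation of s at column j of x)_{j}, where evaluation of a free-magma term at an assignment of its generators is the unique magma-homomorphic extension of that assignment. -/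
/-!
The medial law says exactly that multiplication `X × X → X` is a magma homomorphism for the
pointwise product. By induction on `t`, evaluation of a term `t` is then a magma homomorphism
`(ι → X) → X`, and magma homomorphisms commute with evaluation of any term `s`. Applying this
to `s` evaluated in the pointwise magma `Fin n → X` gives the theorem.
-/

namespace FreeMagma

variable {ι X Y : Type*} [Mul X] [Mul Y]

theorem map_lift (g : X →ₙ* Y) (f : ι → X) (s : FreeMagma ι) :
    g (lift f s) = lift (g ∘ f) s :=
  DFunLike.congr_fun (lift_comp_of' (g.comp (lift f))).symm s

def evalMulHomOfMedial (hmed : ∀ w x y z : X, (w * x) * (y * z) = (w * y) * (x * z))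
    (t : FreeMagma ι) : (ι → X) →ₙ* X where
  toFun f := lift f t
  map_mul' f g := by
    induction t with
    | ih1 i => rfl
    | ih2 a b ha hb => simp only [map_mul, ha, hb]; exact hmed _ _ _ _

theorem evalMulHomOfMedial_apply (hmed : ∀ w x y z : X, (w * x) * (y * z) = (w * y) * (x * z))
    (t : FreeMagma ι) (f : ι → X) : evalMulHomOfMedial hmed t f = lift f t :=
  rfl

end FreeMagma

open FreeMagma

/-- Lemma 3.4, for operations built from one medial binary operation:
if the multiplication on `X` is medial, then any two operations on `X` built by
composing it (encoded as free-magma terms `s`, `t`, evaluated via `FreeMagma.lift`)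
commute with one another. -/
theorem medial_compositions_commute {X : Type*} [Mul X]
    (hmed : ∀ w x y z : X, (w * x) * (y * z) = (w * y) * (x * z))
    {m n : ℕ} (s : FreeMagma (Fin m)) (t : FreeMagma (Fin n))
    (x : Fin m → Fin n → X) :
    FreeMagma.lift (fun i => FreeMagma.lift (fun j => x i j) t) s =
      FreeMagma.lift (fun j => FreeMagma.lift (fun i => x i j) s) t := by
  have lift_columns : lift x s = fun j => lift (fun i => x i j) s :=
    funext fun j => map_lift (Pi.evalMulHom (fun _ => X) j) x s
  calc lift (fun i => lift (x i) t) s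
      = evalMulHomOfMedial hmed t (lift x s) :=
        (map_lift (evalMulHomOfMedial hmed t) x s).symm
    _ = lift (fun j => lift (fun i => x i j) s) t := by
      rw [evalMulHomOfMedial_apply, lift_columns]
end

section
/- (Claim 4.3) Multiplication in 𝒜 is not cancellative: with 2 := 1⊕1, 3₁ := 1⊕2, 3₂ := 2⊕1, 4₁ := 2⊕2 in 𝒜, one has 2·((1⊕2)⊕(4₁⊕1)) = 2·((1⊕3₁)⊕(3₂⊕1)) in 𝒜, yet (1⊕2)⊕(4₁⊕1) ≠ (1⊕3₁)⊕(3₂⊕1) in 𝒜. -/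
/-- `2 := 1 ⊕ 1` in `𝒜`. -/
def NCN.two : NCN := NCN.oplus NCN.one NCN.one

/-- `3₁ := 1 ⊕ 2` in `𝒜`. -/
def NCN.three1 : NCN := NCN.oplus NCN.one NCN.two

/-- `3₂ := 2 ⊕ 1` in `𝒜`. -/
def NCN.three2 : NCN := NCN.oplus NCN.two NCN.one

/-- `4₁ := 2 ⊕ 2` in `𝒜`. -/
def NCN.four1 : NCN := NCN.oplus NCN.two NCN.two

/-!
Since `2·a = a ⊕ a`, the equation is about doubles, and the medial law reshuffles a double far
more freely than a single term: both doubles are reached from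
`(2 ⊕ (2⊕4₁)) ⊕ ((4₁⊕2) ⊕ 2)` by medial moves, using `2⊕4₁ = 3₁⊕3₁` and `4₁⊕2 = 3₂⊕3₂`.
The undoubled terms are told apart by evaluating them in a medial magma, which is constant on
`∼`-classes.
-/

theorem MedialRel.lift_eq {β : Type*} [Mul β]
    (hβ : ∀ w x y z : β, w * x * (y * z) = w * y * (x * z)) (f : PUnit → β)
    {a b : FreeMagma PUnit} (h : MedialRel a b) : FreeMagma.lift f a = FreeMagma.lift f b := by
  induction h with
  | medial => simp only [map_mul]; exact hβ _ _ _ _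
  | refl => rfl
  | symm _ ih => exact ih.symm
  | trans _ _ ih₁ ih₂ => exact ih₁.trans ih₂
  | mul _ _ ih₁ ih₂ => simp only [map_mul, ih₁, ih₂]

def MedialMagma5 : Type := Fin 5

namespace MedialMagma5

instance : DecidableEq MedialMagma5 := inferInstanceAs (DecidableEq (Fin 5))

instance : Fintype MedialMagma5 := inferInstanceAs (Fintype (Fin 5))

instance (n : ℕ) : OfNat MedialMagma5 n := inferInstanceAs (OfNat (Fin 5) n)

-- Generated by `1`, labelled so that `2 = 1*1`, `3 = 1*2`, `4 = 2*1`. Found by a SAT search; no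
-- medial magma with fewer elements separates `(1⊕2)⊕(4₁⊕1)` from `(1⊕3₁)⊕(3₂⊕1)`.
instance : Mul MedialMagma5 :=
  ⟨fun i j : Fin 5 =>
    (![![0, 0, 0, 0, 0], ![0, 2, 3, 3, 3], ![0, 4, 0, 0, 0], ![0, 4, 0, 0, 2], ![0, 4, 0, 0, 0]] :
      Fin 5 → Fin 5 → Fin 5) i j⟩

theorem mul_medial : ∀ w x y z : MedialMagma5, w * x * (y * z) = w * y * (x * z) := by
  decide

end MedialMagma5

namespace NCN

local infixl:65 " ⊙ " => NCN.oplus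

theorem oplus_medial (w x y z : NCN) : (w ⊙ x) ⊙ (y ⊙ z) = (w ⊙ y) ⊙ (x ⊙ z) := by
  induction w using Quot.ind
  induction x using Quot.ind
  induction y using Quot.ind
  induction z using Quot.ind
  exact Quot.sound (.medial _ _ _ _)

theorem two_mul (a : NCN) : NCN.mul two a = a ⊙ a := by
  induction a using Quot.ind
  rfl

theorem two_oplus_four1 : two ⊙ four1 = three1 ⊙ three1 :=
  oplus_medial one one two two

theorem four1_oplus_two : four1 ⊙ two = three2 ⊙ three2 :=
  oplus_medial two two one one

def lift {β : Type*} [Mul β] (hβ : ∀ w x y z : β, w * x * (y * z) = w * y * (x * z))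
    (b : β) : NCN → β :=
  Quot.lift (FreeMagma.lift fun _ => b) fun _ _ => MedialRel.lift_eq hβ _

theorem two_mul_eq_two_mul :
    NCN.mul two ((one ⊙ two) ⊙ (four1 ⊙ one)) =
      NCN.mul two ((one ⊙ three1) ⊙ (three2 ⊙ one)) :=
  calc NCN.mul two ((one ⊙ two) ⊙ (four1 ⊙ one))
      _ = ((one ⊙ two) ⊙ (four1 ⊙ one)) ⊙ ((one ⊙ four1) ⊙ (two ⊙ one)) := by
        rw [NCN.two_mul, oplus_medial one two four1 one]
      _ = ((one ⊙ two) ⊙ (one ⊙ four1)) ⊙ ((four1 ⊙ one) ⊙ (two ⊙ one)) := oplus_medial ..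
      _ = (two ⊙ (two ⊙ four1)) ⊙ ((four1 ⊙ two) ⊙ two) := by
        rw [oplus_medial one two one four1, oplus_medial four1 one two one]; rfl
      _ = (two ⊙ (three1 ⊙ three1)) ⊙ ((three2 ⊙ three2) ⊙ two) := by
        rw [two_oplus_four1, four1_oplus_two]
      _ = ((one ⊙ three1) ⊙ (one ⊙ three1)) ⊙ ((three2 ⊙ one) ⊙ (three2 ⊙ one)) :=
        congrArg₂ (· ⊙ ·) (oplus_medial ..) (oplus_medial ..)
      _ = NCN.mul two ((one ⊙ three1) ⊙ (three2 ⊙ one)) :=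
        (oplus_medial ..).trans (NCN.two_mul _).symm

theorem oplus_ne_oplus : (one ⊙ two) ⊙ (four1 ⊙ one) ≠ (one ⊙ three1) ⊙ (three2 ⊙ one) := by
  intro h
  have hval : (0 : MedialMagma5) = 2 := congrArg (lift MedialMagma5.mul_medial 1) h
  exact absurd hval (by decide)

end NCN

/-- Claim 4.3: multiplication in `𝒜` is not cancellative:
`2·((1⊕2)⊕(4₁⊕1)) = 2·((1⊕3₁)⊕(3₂⊕1))` yet `(1⊕2)⊕(4₁⊕1) ≠ (1⊕3₁)⊕(3₂⊕1)`. -/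
theorem ncn_mul_not_cancellative :
    NCN.mul NCN.two
        (NCN.oplus (NCN.oplus NCN.one NCN.two) (NCN.oplus NCN.four1 NCN.one)) =
      NCN.mul NCN.two
        (NCN.oplus (NCN.oplus NCN.one NCN.three1) (NCN.oplus NCN.three2 NCN.one)) ∧
    NCN.oplus (NCN.oplus NCN.one NCN.two) (NCN.oplus NCN.four1 NCN.one) ≠
      NCN.oplus (NCN.oplus NCN.one NCN.three1) (NCN.oplus NCN.three2 NCN.one) :=
  ⟨NCN.two_mul_eq_two_mul, NCN.oplus_ne_oplus⟩
end

section
/- (§5.4, ℓ is not injective) With 2 := 1⊕1 and 3₁ := 1⊕2 in 𝒜, one has ℓ(2⊕2) = 1 + 2q + q² = ℓ(3₁⊕1) in ℤ[q], yet 2⊕2 ≠ 3₁⊕1 in 𝒜. -/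
def FreeMagma.height {α : Type*} : FreeMagma α → ℕ
  | .of _ => 0
  | .mul a b => max a.height b.height + 1

@[simp]
theorem FreeMagma.height_mul {α : Type*} (a b : FreeMagma α) :
    (a * b).height = max a.height b.height + 1 :=
  rfl

-- Both sides of the medial law have height `max (w, x, y, z) + 2`.
theorem MedialRel.height_eq {a b : FreeMagma PUnit} (h : MedialRel a b) :
    a.height = b.height := by
  induction h with
  | medial w x y z => simp only [FreeMagma.height_mul]; omega
  | refl a => rfl
  | symm _ ih => exact ih.symm
  | trans _ _ ih₁ ih₂ => exact ih₁.trans ih₂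
  | mul _ _ ih₁ ih₂ => simp only [FreeMagma.height_mul, ih₁, ih₂]

def NCN.height : NCN → ℕ :=
  Quot.lift FreeMagma.height fun _ _ h => h.height_eq

/-- §5.4, `ℓ` is not injective:
`ℓ(2⊕2) = 1 + 2q + q² = ℓ(3₁⊕1)` yet `2⊕2 ≠ 3₁⊕1` in `𝒜`. -/
theorem ncn_ell_not_injective (ell : NCN → Polynomial ℤ)
    (hone : ell NCN.one = 1)
    (hoplus : ∀ a b : NCN, ell (NCN.oplus a b) = ell a + Polynomial.X * ell b) :
    ell (NCN.oplus NCN.two NCN.two) = 1 + 2 * Polynomial.X + Polynomial.X ^ 2 ∧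
    ell (NCN.oplus NCN.three1 NCN.one) = 1 + 2 * Polynomial.X + Polynomial.X ^ 2 ∧
    NCN.oplus NCN.two NCN.two ≠ NCN.oplus NCN.three1 NCN.one := by
  have hell_two : ell NCN.two = 1 + Polynomial.X := by
    rw [NCN.two, hoplus, hone, mul_one]
  refine ⟨?_, ?_, ?_⟩
  · rw [hoplus, hell_two]; ring
  · rw [hoplus, NCN.three1, hoplus, hell_two, hone]; ring
  · exact ne_of_apply_ne NCN.height (show 2 ≠ 3 by decide)
end

section
/- (§2.4, table 2 for n = 5) The image in 𝒜 of the set M₅ of elements of M of magnitude 5 has exactly 13 elements, whereas |M₅| = C(5) = 14; the unique coincidence is the identity (1⊕(1⊕1))⊕(1⊕1) = (1⊕1)⊕((1⊕1)⊕1) in 𝒜. -/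
/-!
Any medial operation on a set `N` turns evaluation of magma words in `N` into an invariant of
`∼`. We use the multiset recording, for each occurrence of the generator, how many left and how
many right branchings lead to it: the medial law only exchanges `x` and `y` in
`(w⊕x)⊕(y⊕z)`, and both are reached by one left and one right branching. Enumerating the
14 elements of magnitude 5 through binary trees with 4 internal nodes (whence `catalan 4` in
Mathlib's indexing), a finite computation shows that this invariant separates all of them
except the two sides of one instance of the medial law.
-/

open BinaryTree

namespace FreeMagma

def toBinaryTree : FreeMagma PUnit → BinaryTree Unit
  | of _ => nil
  | mul a b => node () a.toBinaryTree b.toBinaryTree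

def ofBinaryTree : BinaryTree Unit → FreeMagma PUnit
  | nil => of PUnit.unit
  | node _ a b => ofBinaryTree a * ofBinaryTree b

def equivBinaryTree : FreeMagma PUnit ≃ BinaryTree Unit where
  toFun := toBinaryTree
  invFun := ofBinaryTree
  left_inv m := by
    induction m with
    | ih1 => rfl
    | ih2 a b iha ihb => exact congrArg₂ (· * ·) iha ihb
  right_inv t := by
    induction t with
    | nil => rfl
    | node _ a b iha ihb => exact congrArg₂ (node ()) iha ihb

theorem numLeaves_toBinaryTree (m : FreeMagma PUnit) : m.toBinaryTree.numLeaves = m.length := by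
  induction m with
  | ih1 => rfl
  | ih2 a b iha ihb => simp only [toBinaryTree, numLeaves, iha, ihb]; rfl

theorem mem_map_treesOfNumNodesEq {n : ℕ} {m : FreeMagma PUnit} :
    m ∈ (treesOfNumNodesEq n).map equivBinaryTree.symm.toEmbedding ↔ m.length = n + 1 := by
  rw [Finset.mem_map_equiv, Equiv.symm_symm, mem_treesOfNumNodesEq, ← numLeaves_toBinaryTree,
    numLeaves_eq_numNodes_succ]
  exact Nat.succ_inj.symm

theorem coe_map_treesOfNumNodesEq (n : ℕ) :
    ((treesOfNumNodesEq n).map equivBinaryTree.symm.toEmbedding : Set (FreeMagma PUnit)) =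
      {m | m.length = n + 1} :=
  Set.ext fun _ => mem_map_treesOfNumNodesEq

theorem ncard_setOf_length_eq_succ (n : ℕ) :
    {m : FreeMagma PUnit | m.length = n + 1}.ncard = catalan n := by
  rw [← coe_map_treesOfNumNodesEq n, Set.ncard_coe_finset, Finset.card_map,
    treesOfNumNodesEq_card_eq_catalan]

def evalWith {N : Type*} (op : N → N → N) (e : N) : FreeMagma PUnit → N
  | of _ => e
  | mul a b => op (evalWith op e a) (evalWith op e b)

def leafProfile : FreeMagma PUnit → Multiset (ℕ × ℕ) :=
  evalWith (fun s t => s.map (Prod.map (· + 1) id) + t.map (Prod.map id (· + 1))) {(0, 0)}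

end FreeMagma

theorem MedialRel.evalWith_eq {N : Type*} {op : N → N → N}
    (medial : ∀ w x y z, op (op w x) (op y z) = op (op w y) (op x z)) (e : N)
    {a b : FreeMagma PUnit} (h : MedialRel a b) : a.evalWith op e = b.evalWith op e := by
  induction h with
  | medial w x y z => exact medial ..
  | refl => rfl
  | symm _ ih => exact ih.symm
  | trans _ _ ih₁ ih₂ => exact ih₁.trans ih₂
  | mul _ _ ih₁ ih₂ => exact congrArg₂ op ih₁ ih₂

theorem MedialRel.leafProfile_eq {a b : FreeMagma PUnit} (h : MedialRel a b) :
    a.leafProfile = b.leafProfile := by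
  refine h.evalWith_eq (fun w x y z => ?_) _
  simp only [Multiset.map_add, Multiset.map_map, Prod.map_comp_map, Function.id_comp,
    Function.comp_id]
  abel

theorem FreeMagma.leafProfile_eq_of_quot_mk_eq {a b : FreeMagma PUnit}
    (h : Quot.mk MedialRel a = Quot.mk MedialRel b) : a.leafProfile = b.leafProfile :=
  congrArg (Quot.lift FreeMagma.leafProfile fun _ _ => MedialRel.leafProfile_eq) h

theorem Set.ncard_image_eq_ncard_sub_one {α β : Type*} {f : α → β} {s : Set α} {a b : α}
    (ha : a ∈ s) (hb : b ∈ s) (hab : a ≠ b) (hf : f a = f b) (hinj : Set.InjOn f (s \ {b})) :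
    (f '' s).ncard = s.ncard - 1 := by
  have himage : f '' s = f '' (s \ {b}) := by
    refine (Set.image_mono Set.sdiff_subset).antisymm' ?_
    rintro _ ⟨x, hx, rfl⟩
    obtain rfl | hxb := eq_or_ne x b
    · exact ⟨a, ⟨ha, hab⟩, hf⟩
    · exact ⟨x, ⟨hx, hxb⟩, rfl⟩
  rw [himage, hinj.ncard_image, Set.ncard_sdiff_singleton_of_mem hb]

universe u

local notation "ι" => FreeMagma.of PUnit.unit

theorem FreeMagma.eq_or_of_leafProfile_eq (a : FreeMagma PUnit.{u + 1}) (ha : a.length = 5)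
    (b : FreeMagma PUnit.{u + 1}) (hb : b.length = 5) (h : a.leafProfile = b.leafProfile) :
    a = b ∨ (a = ι * (ι * ι) * (ι * ι) ∧ b = ι * ι * (ι * ι * ι)) ∨
      (a = ι * ι * (ι * ι * ι) ∧ b = ι * (ι * ι) * (ι * ι)) := by
  rw [← mem_map_treesOfNumNodesEq (n := 4)] at ha hb
  revert b hb h
  revert a ha
  decide +kernel

theorem MedialRel.eq_or_of_quot_mk_eq {a b : FreeMagma PUnit.{u + 1}} (ha : a.length = 5)
    (hb : b.length = 5) (hab : a ≠ b) (h : Quot.mk MedialRel a = Quot.mk MedialRel b) :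
    (a = ι * (ι * ι) * (ι * ι) ∧ b = ι * ι * (ι * ι * ι)) ∨
      (a = ι * ι * (ι * ι * ι) ∧ b = ι * (ι * ι) * (ι * ι)) :=
  (FreeMagma.eq_or_of_leafProfile_eq a ha b hb
    (FreeMagma.leafProfile_eq_of_quot_mk_eq h)).resolve_left hab

theorem FreeMagma.ncard_setOf_length_eq_five :
    {m : FreeMagma PUnit.{u + 1} | m.length = 5}.ncard = 14 := by
  rw [ncard_setOf_length_eq_succ 4, catalan_eq_centralBinom_div]
  decide

theorem MedialRel.ncard_image_quot_mk_setOf_length_eq_five :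
    ((fun m => Quot.mk MedialRel m) '' {m : FreeMagma PUnit.{u + 1} | m.length = 5}).ncard =
      13 := by
  have hinj : Set.InjOn (fun m => Quot.mk MedialRel m)
      ({m : FreeMagma PUnit.{u + 1} | m.length = 5} \ {ι * ι * (ι * ι * ι)}) := by
    rintro x ⟨hx, hxB⟩ y ⟨hy, hyB⟩ hxy
    by_contra hne
    rcases eq_or_of_quot_mk_eq hx hy hne hxy with ⟨-, rfl⟩ | ⟨rfl, -⟩
    exacts [hyB rfl, hxB rfl]
  rw [Set.ncard_image_eq_ncard_sub_one (a := ι * (ι * ι) * (ι * ι)) (by rfl) (by rfl)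
    (by decide) (Quot.sound (.medial ι (ι * ι) ι ι)) hinj,
    FreeMagma.ncard_setOf_length_eq_five]

/-- §2.4, table 2 for `n = 5`: the set `M₅` of magnitude-5 elements of
`M` has `C(5) = 14` elements, its image in `𝒜` has exactly `13` elements, and the
unique coincidence is `(1⊕(1⊕1))⊕(1⊕1) = (1⊕1)⊕((1⊕1)⊕1)`. -/
theorem ncn_table2_magnitude_five :
    {m : FreeMagma PUnit | m.length = 5}.ncard = 14 ∧
    ((fun m => Quot.mk MedialRel m) '' {m : FreeMagma PUnit | m.length = 5}).ncard = 13 ∧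
    Quot.mk MedialRel
        ((FreeMagma.of PUnit.unit * (FreeMagma.of PUnit.unit * FreeMagma.of PUnit.unit)) *
          (FreeMagma.of PUnit.unit * FreeMagma.of PUnit.unit)) =
      Quot.mk MedialRel
        ((FreeMagma.of PUnit.unit * FreeMagma.of PUnit.unit) *
          ((FreeMagma.of PUnit.unit * FreeMagma.of PUnit.unit) * FreeMagma.of PUnit.unit)) ∧
    ∀ a b : FreeMagma PUnit, a.length = 5 → b.length = 5 → a ≠ b →
      Quot.mk MedialRel a = Quot.mk MedialRel b →
      (a = (FreeMagma.of PUnit.unit * (FreeMagma.of PUnit.unit * FreeMagma.of PUnit.unit)) *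
            (FreeMagma.of PUnit.unit * FreeMagma.of PUnit.unit) ∧
        b = (FreeMagma.of PUnit.unit * FreeMagma.of PUnit.unit) *
            ((FreeMagma.of PUnit.unit * FreeMagma.of PUnit.unit) * FreeMagma.of PUnit.unit)) ∨
      (a = (FreeMagma.of PUnit.unit * FreeMagma.of PUnit.unit) *
            ((FreeMagma.of PUnit.unit * FreeMagma.of PUnit.unit) * FreeMagma.of PUnit.unit) ∧
        b = (FreeMagma.of PUnit.unit * (FreeMagma.of PUnit.unit * FreeMagma.of PUnit.unit)) *
            (FreeMagma.of PUnit.unit * FreeMagma.of PUnit.unit)) :=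
  ⟨FreeMagma.ncard_setOf_length_eq_five, MedialRel.ncard_image_quot_mk_setOf_length_eq_five,
   Quot.sound (.medial ι (ι * ι) ι ι), fun _ _ => MedialRel.eq_or_of_quot_mk_eq⟩
end
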